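/- Let M be a finite monoid satisfying (xyz)^ω·y·(xyz)^ω = (xyz)^ω for all x, y, z ∈ M, and suppose M is generated by n ≥ 1 elements. If M satisfies the identity u_N = v_N for some N > n, then M satisfies the identity u_n = v_n. -/
import Mathlib


/-- The ω-power of an element of a finite monoid: `m ^ (card M)!`, which is
the unique idempotent among the positive powers of `m`. -/
def omegaPow {M : Type} [Monoid M] [Fintype M] (m : M) : M :=
  m ^ (Fintype.card M).factorial

/-- `chainProd X k = X 1 * X 2 * ⋯ * X k`. -/
def chainProd {M : Type} [Monoid M] (X : ℕ → M) (k : ℕ) : M :=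
  ((List.range k).map fun i => X (i + 1)).prod

/-- The value of the term `u_n` under the assignment `X` of the variables `x₁, x₂, …`:
`u₁ = (x₁x₂)^ω` and `u_{n+1} = (x₁⋯x_{2n}x_{2n+1})^ω · u_n · (x_{2n+2}x₁⋯x_{2n})^ω`. -/
def uTerm {M : Type} [Monoid M] [Fintype M] (X : ℕ → M) : ℕ → M
  | 0 => 1
  | 1 => omegaPow (X 1 * X 2)
  | n + 2 => omegaPow (chainProd X (2 * (n + 1) + 1)) * uTerm X (n + 1) *
      omegaPow (X (2 * (n + 1) + 2) * chainProd X (2 * (n + 1)))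

/-- The value of the term `v_n` under the assignment `X`:
`v₁ = (x₂x₁)^ω` and `v_{n+1} = (x₁⋯x_{2n}x_{2n+1})^ω · v_n · (x_{2n+2}x₁⋯x_{2n})^ω`. -/
def vTerm {M : Type} [Monoid M] [Fintype M] (X : ℕ → M) : ℕ → M
  | 0 => 1
  | 1 => omegaPow (X 2 * X 1)
  | n + 2 => omegaPow (chainProd X (2 * (n + 1) + 1)) * vTerm X (n + 1) *
      omegaPow (X (2 * (n + 1) + 2) * chainProd X (2 * (n + 1)))

section Aux

variable {M : Type} [Monoid M] [Fintype M]

/-- The ω-power is idempotent. -/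
lemma omegaPow_idem (m : M) : omegaPow m * omegaPow m = omegaPow m := by
  -- find a repeat among the powers
  have hkey : ∃ i j : ℕ, i < j ∧ j ≤ Fintype.card M ∧ m ^ i = m ^ j := by
    obtain ⟨a, b, hab, heq⟩ := Fintype.exists_ne_map_eq_of_card_lt
      (fun j : Fin (Fintype.card M + 1) => m ^ (j : ℕ)) (by simp)
    rcases lt_or_gt_of_ne (fun hv => hab (Fin.ext hv)) with hlt | hlt
    · exact ⟨a, b, hlt, by omega, heq⟩
    · exact ⟨b, a, hlt, by omega, heq.symm⟩
  obtain ⟨i, j, hij, hjc, heq⟩ := hkey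
  set p := j - i with hp
  have hppos : 0 < p := by omega
  have hstep : ∀ a : ℕ, i ≤ a → m ^ a = m ^ (a + p) := by
    intro a ha
    have h1 : m ^ a = m ^ i * m ^ (a - i) := by
      rw [← pow_add]; congr 1; omega
    have h2 : m ^ (a + p) = m ^ j * m ^ (a - i) := by
      rw [← pow_add]; congr 1; omega
    rw [h1, h2, heq]
  have hiter : ∀ d a : ℕ, i ≤ a → m ^ a = m ^ (a + d * p) := by
    intro d
    induction d with
    | zero => intro a _; simp
    | succ d ih =>
      intro a ha
      have h1 := ih a ha
      have h2 := hstep (a + d * p) (by omega)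
      rw [h1, h2]; congr 1; ring
  set K := (Fintype.card M).factorial with hK
  have hpK : p ∣ K := Nat.dvd_factorial hppos (by omega)
  have hiK : i ≤ K := le_trans (by omega) (Nat.self_le_factorial _)
  obtain ⟨d, hd⟩ := hpK
  have hmain : m ^ (K + K) = m ^ K := by
    have h1 := hiter d K hiK
    have h2 : K + K = K + d * p := by rw [hd]; ring
    rw [h2, ← h1]
  calc omegaPow m * omegaPow m = m ^ (K + K) := by rw [omegaPow, pow_add]
    _ = m ^ K := hmain
    _ = omegaPow m := rfl

variable (hDA : ∀ x y z : M,
    omegaPow (x * y * z) * y * omegaPow (x * y * z) = omegaPow (x * y * z))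

include hDA

/-- Rectangular-band lemma: in DA, `c e c = c` implies `c` is idempotent. -/
lemma sq_of_sandwich {c e : M} (h : c * e * c = c) : c * c = c := by
  have h1 : ∀ k, c * (e * c) ^ k = c := by
    intro k
    induction k with
    | zero => simp
    | succ k ih => rw [pow_succ, ← mul_assoc, ih, ← mul_assoc, h]
  have hcP : c * omegaPow (e * c) = c := h1 _
  have hPcP : omegaPow (e * c) * c * omegaPow (e * c) = omegaPow (e * c) := by
    have := hDA e c 1
    simpa [mul_one] using this
  have hPc : omegaPow (e * c) * c = omegaPow (e * c) := by
    have h2 : omegaPow (e * c) * (c * omegaPow (e * c)) = omegaPow (e * c) * c := by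
      rw [hcP]
    rw [← mul_assoc] at h2
    rw [← h2, hPcP]
  calc c * c = (c * omegaPow (e * c)) * c := by rw [hcP]
    _ = c * (omegaPow (e * c) * c) := by rw [mul_assoc]
    _ = c * omegaPow (e * c) := by rw [hPc]
    _ = c := hcP

/-- Absorbed elements are closed under multiplication. -/
lemma absorb_mul {e s t : M} (hs : e * s * e = e) (ht : e * t * e = e) :
    e * (s * t) * e = e := by
  have hfe : (t * e * s) * e = t * e := by
    rw [mul_assoc t e s, mul_assoc t (e * s) e, hs]
  have hef : e * (t * e * s) = e * s := by
    rw [← mul_assoc e (t * e) s, ← mul_assoc e t e, ht]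
  have hfef : (t * e * s) * e * (t * e * s) = t * e * s := by
    rw [hfe, mul_assoc t e (t * e * s), hef, ← mul_assoc t e s]
  have hff : (t * e * s) * (t * e * s) = t * e * s := sq_of_sandwich hDA hfef
  calc e * (s * t) * e = (e * s) * (t * e) := by simp only [mul_assoc]
    _ = (e * (t * e * s)) * ((t * e * s) * e) := by rw [hef, hfe]
    _ = e * ((t * e * s) * (t * e * s)) * e := by simp only [mul_assoc]
    _ = e * (t * e * s) * e := by rw [hff]
    _ = (e * s) * e := by rw [hef]
    _ = e := hs

/-- An idempotent absorbing every generator absorbs the whole closure. -/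
lemma absorb_closure {e : M} (he : e * e = e) {S : Set M}
    (hS : ∀ g ∈ S, e * g * e = e) {z : M} (hz : z ∈ Submonoid.closure S) :
    e * z * e = e := by
  induction hz using Submonoid.closure_induction with
  | mem g hg => exact hS g hg
  | one => rw [mul_one]; exact he
  | mul x y _ _ hx hy => exact absorb_mul hDA hx hy

/-- Key multiplication-collapsing lemma: `e z f = e f` for closure elements. -/
lemma collapse {e f : M} (he : e * e = e) (hf : f * f = f) {S : Set M}
    (hSe : ∀ g ∈ S, e * g * e = e) (hSf : ∀ g ∈ S, f * g * f = f)
    (hemem : e ∈ Submonoid.closure S) (hfmem : f ∈ Submonoid.closure S)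
    {z : M} (hz : z ∈ Submonoid.closure S) :
    e * z * f = e * f := by
  have h1 : f * (e * z) * f = f :=
    absorb_closure hDA hf hSf (mul_mem hemem hz)
  have h2 : e * f * e = e := absorb_closure hDA he hSe hfmem
  have key : e * f = e * z * f := by
    calc e * f = e * (f * (e * z) * f) := by rw [h1]
      _ = (e * f * e) * z * f := by simp only [mul_assoc]
      _ = e * z * f := by rw [h2]
  exact key.symm

end Aux

section Chain

variable {M : Type} [Monoid M]

lemma chainProd_zero (X : ℕ → M) : chainProd X 0 = 1 := rfl

lemma chainProd_succ (X : ℕ → M) (k : ℕ) :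
    chainProd X (k + 1) = chainProd X k * X (k + 1) := by
  unfold chainProd
  rw [List.range_succ, List.map_append, List.prod_append, List.map_singleton,
    List.prod_singleton]

/-- Each variable with `1 ≤ i ≤ k` is a (two-sided) factor of `chainProd X k`. -/
lemma chainProd_factor (X : ℕ → M) (i k : ℕ) (h1 : 1 ≤ i) (h2 : i ≤ k) :
    ∃ u v : M, u * X i * v = chainProd X k := by
  induction k with
  | zero => omega
  | succ k ih =>
    rcases Nat.lt_or_ge k i with hk | hk
    · -- i = k + 1
      have : i = k + 1 := by omega
      subst this
      exact ⟨chainProd X k, 1, by rw [mul_one, chainProd_succ]⟩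
    · obtain ⟨u, v, huv⟩ := ih hk
      exact ⟨u, v * X (k + 1), by
        rw [chainProd_succ, ← huv, mul_assoc, mul_assoc, mul_assoc]⟩

lemma chainProd_mem (N : Submonoid M) (X : ℕ → M) (k : ℕ)
    (hX : ∀ i, 1 ≤ i → i ≤ k → X i ∈ N) : chainProd X k ∈ N := by
  induction k with
  | zero => exact N.one_mem
  | succ k ih =>
    rw [chainProd_succ]
    exact mul_mem (ih fun i h1 h2 => hX i h1 (by omega)) (hX (k + 1) (by omega) le_rfl)

end Chain

section Mem

variable {M : Type} [Monoid M] [Fintype M]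

lemma omegaPow_mem (N : Submonoid M) {m : M} (hm : m ∈ N) : omegaPow m ∈ N :=
  pow_mem hm _

lemma uTerm_mem (N : Submonoid M) (X : ℕ → M) (n : ℕ)
    (hX : ∀ i, 1 ≤ i → i ≤ 2 * n → X i ∈ N) : uTerm X n ∈ N := by
  induction n using Nat.twoStepInduction with
  | zero => exact N.one_mem
  | one => exact omegaPow_mem N (mul_mem (hX 1 (by omega) (by omega)) (hX 2 (by omega) (by omega)))
  | more n _ ih =>
    show omegaPow (chainProd X (2 * (n + 1) + 1)) * uTerm X (n + 1) *
      omegaPow (X (2 * (n + 1) + 2) * chainProd X (2 * (n + 1))) ∈ N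
    refine mul_mem (mul_mem ?_ ?_) ?_
    · exact omegaPow_mem N (chainProd_mem N X _ fun i h1 h2 => hX i h1 (by omega))
    · exact ih fun i h1 h2 => hX i h1 (by omega)
    · exact omegaPow_mem N (mul_mem (hX _ (by omega) (by omega))
        (chainProd_mem N X _ fun i h1 h2 => hX i h1 (by omega)))

lemma vTerm_mem (N : Submonoid M) (X : ℕ → M) (n : ℕ)
    (hX : ∀ i, 1 ≤ i → i ≤ 2 * n → X i ∈ N) : vTerm X n ∈ N := by
  induction n using Nat.twoStepInduction with
  | zero => exact N.one_mem
  | one => exact omegaPow_mem N (mul_mem (hX 2 (by omega) (by omega)) (hX 1 (by omega) (by omega)))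
  | more n _ ih =>
    show omegaPow (chainProd X (2 * (n + 1) + 1)) * vTerm X (n + 1) *
      omegaPow (X (2 * (n + 1) + 2) * chainProd X (2 * (n + 1))) ∈ N
    refine mul_mem (mul_mem ?_ ?_) ?_
    · exact omegaPow_mem N (chainProd_mem N X _ fun i h1 h2 => hX i h1 (by omega))
    · exact ih fun i h1 h2 => hX i h1 (by omega)
    · exact omegaPow_mem N (mul_mem (hX _ (by omega) (by omega))
        (chainProd_mem N X _ fun i h1 h2 => hX i h1 (by omega)))

omit [Fintype M] in
/-- Anything in the closure of `S` that is a factor of `P` lies in the closure of the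
set of elements of `S` that are factors of `P`. -/
lemma mem_closure_filter {S : Finset M} {P : M} [DecidablePred fun g : M => ∃ x y, x * g * y = P]
    {z : M} (hz : z ∈ Submonoid.closure (S : Set M)) :
    ∀ u v : M, u * z * v = P →
      z ∈ Submonoid.closure ((S.filter fun g => ∃ x y, x * g * y = P : Finset M) : Set M) := by
  induction hz using Submonoid.closure_induction with
  | mem g hg =>
    intro u v huv
    exact Submonoid.subset_closure (by
      simp only [Finset.coe_filter, Set.mem_setOf_eq]
      exact ⟨hg, u, v, huv⟩)
  | one => intro u v _; exact Submonoid.one_mem _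
  | mul a b _ _ ha hb =>
    intro u v huv
    refine mul_mem (ha u (b * v) ?_) (hb (u * a) v ?_)
    · rw [← huv]; simp only [mul_assoc]
    · rw [← huv]; simp only [mul_assoc]

end Mem

section Main

variable {M : Type} [Monoid M] [Fintype M]

lemma aux_un_eq_vn
    (hDA : ∀ x y z : M,
      omegaPow (x * y * z) * y * omegaPow (x * y * z) = omegaPow (x * y * z)) :
    ∀ (m : ℕ) (S : Finset M), S.card ≤ m + 1 →
      ∀ X : ℕ → M, (∀ i, 1 ≤ i → i ≤ 2 * (m + 1) → X i ∈ Submonoid.closure (S : Set M)) →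
        uTerm X (m + 1) = vTerm X (m + 1) := by
  intro m
  induction m with
  | zero =>
    intro S hcard X hX
    haveI : Nonempty M := ⟨1⟩
    have hcomm : X 1 * X 2 = X 2 * X 1 := by
      obtain ⟨g, hg⟩ := Finset.card_le_one_iff_subset_singleton.mp hcard
      have hsub : (S : Set M) ⊆ ({g} : Set M) := by
        simpa using Finset.coe_subset.mpr hg
      have h1 := Submonoid.closure_mono hsub (hX 1 (by omega) (by omega))
      have h2 := Submonoid.closure_mono hsub (hX 2 (by omega) (by omega))
      obtain ⟨k1, hk1⟩ := Submonoid.mem_closure_singleton.mp h1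
      obtain ⟨k2, hk2⟩ := Submonoid.mem_closure_singleton.mp h2
      rw [← hk1, ← hk2, pow_mul_comm]
    show omegaPow (X 1 * X 2) = omegaPow (X 2 * X 1)
    rw [hcomm]
  | succ m ih =>
    intro S hcard X hX
    classical
    set P := chainProd X (2 * (m + 1)) with hP
    set T := S.filter (fun g => ∃ x y, x * g * y = P) with hT
    by_cases hTS : T = S
    · -- every generator divides P : collapse both sides to `e * f`
      have hdiv : ∀ g ∈ S, ∃ x y : M, x * g * y = P := by
        intro g hg
        have hgT : g ∈ T := hTS ▸ hg
        exact (Finset.mem_filter.mp hgT).2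
      set e := omegaPow (chainProd X (2 * (m + 1) + 1)) with he'
      set f := omegaPow (X (2 * (m + 1) + 2) * chainProd X (2 * (m + 1))) with hf'
      have he : e * e = e := omegaPow_idem _
      have hf : f * f = f := omegaPow_idem _
      have hSe : ∀ g ∈ (S : Set M), e * g * e = e := by
        intro g hg
        obtain ⟨x, y, hxy⟩ := hdiv g hg
        have harg : chainProd X (2 * (m + 1) + 1) = x * g * (y * X (2 * (m + 1) + 1)) := by
          rw [chainProd_succ, ← hP, ← hxy]
          simp only [mul_assoc]
        rw [he', harg]
        exact hDA x g (y * X (2 * (m + 1) + 1))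
      have hSf : ∀ g ∈ (S : Set M), f * g * f = f := by
        intro g hg
        obtain ⟨x, y, hxy⟩ := hdiv g hg
        have harg : X (2 * (m + 1) + 2) * chainProd X (2 * (m + 1)) =
            (X (2 * (m + 1) + 2) * x) * g * y := by
          rw [← hP, ← hxy]
          simp only [mul_assoc]
        rw [hf', harg]
        exact hDA (X (2 * (m + 1) + 2) * x) g y
      have hXc : ∀ i, 1 ≤ i → i ≤ 2 * (m + 1) + 2 → X i ∈ Submonoid.closure (S : Set M) :=
        fun i h1 h2 => hX i h1 (by omega)
      have hemem : e ∈ Submonoid.closure (S : Set M) :=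
        omegaPow_mem _ (chainProd_mem _ X _ fun i h1 h2 => hXc i h1 (by omega))
      have hfmem : f ∈ Submonoid.closure (S : Set M) :=
        omegaPow_mem _ (mul_mem (hXc (2 * (m + 1) + 2) (by omega) (by omega))
          (chainProd_mem _ X _ fun i h1 h2 => hXc i h1 (by omega)))
      have hu : uTerm X (m + 1) ∈ Submonoid.closure (S : Set M) :=
        uTerm_mem _ X _ fun i h1 h2 => hXc i h1 (by omega)
      have hv : vTerm X (m + 1) ∈ Submonoid.closure (S : Set M) :=
        vTerm_mem _ X _ fun i h1 h2 => hXc i h1 (by omega)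
      have hcu := collapse hDA he hf hSe hSf hemem hfmem hu
      have hcv := collapse hDA he hf hSe hSf hemem hfmem hv
      show e * uTerm X (m + 1) * f = e * vTerm X (m + 1) * f
      rw [hcu, hcv]
    · -- some generator is not a factor of P : use the induction hypothesis
      have hTsub : T ⊆ S := by rw [hT]; exact Finset.filter_subset _ _
      have hTcard : T.card ≤ m + 1 := by
        have := Finset.card_lt_card (Finset.ssubset_iff_subset_ne.mpr ⟨hTsub, hTS⟩)
        omega
      have hXT : ∀ i, 1 ≤ i → i ≤ 2 * (m + 1) → X i ∈ Submonoid.closure (T : Set M) := by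
        intro i h1 h2
        obtain ⟨u, v, huv⟩ := chainProd_factor X i (2 * (m + 1)) h1 h2
        rw [hT]
        exact mem_closure_filter (hX i h1 (by omega)) u v (by rw [hP]; exact huv)
      have huv := ih T hTcard X hXT
      show omegaPow (chainProd X (2 * (m + 1) + 1)) * uTerm X (m + 1) *
          omegaPow (X (2 * (m + 1) + 2) * chainProd X (2 * (m + 1))) =
        omegaPow (chainProd X (2 * (m + 1) + 1)) * vTerm X (m + 1) *
          omegaPow (X (2 * (m + 1) + 2) * chainProd X (2 * (m + 1)))
      rw [huv]

end Main

/-- If `M ∈ DA` is generated by `n ≥ 1` elements and satisfies `u_N = v_N` for some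
`N > n`, then `M` satisfies `u_n = v_n`. -/
theorem un_eq_vn_of_uN_eq_vN (M : Type) [Monoid M] [Fintype M]
    (hDA : ∀ x y z : M,
      omegaPow (x * y * z) * y * omegaPow (x * y * z) = omegaPow (x * y * z))
    (n : ℕ) (hn : 1 ≤ n)
    (hgen : ∃ S : Finset M, S.card ≤ n ∧ Submonoid.closure (S : Set M) = ⊤)
    (N : ℕ) (hN : n < N) (h : ∀ X : ℕ → M, uTerm X N = vTerm X N) :
    ∀ X : ℕ → M, uTerm X n = vTerm X n := by
  obtain ⟨S, hcard, htop⟩ := hgen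
  obtain ⟨m, rfl⟩ : ∃ m, n = m + 1 := ⟨n - 1, by omega⟩
  intro X
  exact aux_un_eq_vn hDA m S hcard X
    (fun i _ _ => by rw [htop]; exact Submonoid.mem_top _)
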